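/- Let T = ℂ² with symplectic form ω((a,b),(a',b')) = ab' − a'b, let E = [[0,1],[0,0]] ∈ 𝔰𝔩₂, and let d ≥ 0. Consider the system of quadratic equations in v = v₀ + v₁z + ... + v_d z^d ∈ T ⊗ ℂ[z]/(z^{d+1}): the coefficient of z^l in ω(v, E·v) (computed in T[z] with ω extended ℂ[z]-bilinearly) vanishes for every 0 ≤ l ≤ d. Then the solution set equals ℂ[z]·e₁ + z^{⌊d/2⌋+1}·(T ⊗ ℂ[z]/(z^{d+1})), i.e. v is a solution if and only if v_m ∈ ℂe₁ for all m ≤ ⌊d/2⌋. -/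
import Mathlib


/-- the standard symplectic form on `T = ℂ²`. -/
def omegaT (p q : ℂ × ℂ) : ℂ := p.1 * q.2 - q.1 * p.2

/-- the action of `E = [[0,1],[0,0]]` on `ℂ²`. -/
def Eact (p : ℂ × ℂ) : ℂ × ℂ := (p.2, 0)

/-- for `v = v₀ + v₁z + ⋯ + v_d z^d ∈ T ⊗ ℂ[z]/(z^{d+1})`, the system of
quadratic equations `Coeff_{z^l} ω(v, E·v) = 0` for all `0 ≤ l ≤ d` holds iff
`v_m ∈ ℂe₁` (i.e. the second component of `v_m` vanishes) for all `m ≤ ⌊d/2⌋`,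
i.e. the solution set is `ℂ[z]·e₁ + z^{⌊d/2⌋+1}·(T ⊗ ℂ[z]/(z^{d+1}))`. -/
theorem stmt7 (d : ℕ) (v : ℕ → ℂ × ℂ) :
    (∀ l ≤ d, ∑ m ∈ Finset.range (l + 1), omegaT (v m) (Eact (v (l - m))) = 0) ↔
    (∀ m ≤ d / 2, (v m).2 = 0) := by
  have key : ∀ l, ∑ m ∈ Finset.range (l + 1), omegaT (v m) (Eact (v (l - m))) =
      -∑ m ∈ Finset.range (l + 1), (v m).2 * (v (l - m)).2 := by
    intro l
    rw [← Finset.sum_neg_distrib]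
    exact Finset.sum_congr rfl fun m _ => by simp [omegaT, Eact]; ring
  constructor
  · intro h m hm
    induction m using Nat.strong_induction_on with
    | _ m ih =>
      have h2 : 2 * m ≤ d := by omega
      have hs := h (2 * m) h2
      rw [key, neg_eq_zero] at hs
      have hz : ∀ j ∈ Finset.range (2 * m + 1), j ≠ m →
          (v j).2 * (v (2 * m - j)).2 = 0 := by
        intro j hj hne
        rcases lt_or_gt_of_ne hne with hlt | hgt
        · rw [ih j hlt (by omega)]; ring
        · simp only [Finset.mem_range] at hj
          rw [ih (2 * m - j) (by omega) (by omega)]; ring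
      rw [Finset.sum_eq_single_of_mem m (by simp [Finset.mem_range]; omega) hz] at hs
      have : 2 * m - m = m := by omega
      rw [this] at hs
      exact mul_self_eq_zero.mp hs
  · intro h l hl
    rw [key, neg_eq_zero]
    apply Finset.sum_eq_zero
    intro m hm
    simp only [Finset.mem_range] at hm
    by_cases hc : m ≤ d / 2
    · rw [h m hc]; ring
    · rw [h (l - m) (by omega)]; ring
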